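/- For every n ≥ 1, S_{3,0}(n) > 0, where S_{3,0}(n) = Σ_{0 ≤ j < n, j ≡ 0 mod 3} (-1)^{s(j)} is the 3-rarefied Thue-Morse sum (Newman's theorem / Moser's conjecture). -/
import Mathlib


/-- Binary digit sum. -/
def binDigitSum (n : ℕ) : ℕ := (Nat.digits 2 n).sum

/-- The ±1 Thue–Morse sequence. -/
def tm (n : ℕ) : ℤ := (-1) ^ (binDigitSum n)

/-- The `p`-rarefied sums of the Thue–Morse sequence. -/
def rarefiedSum (p j n : ℕ) : ℤ :=
  ∑ l ∈ (Finset.range n).filter (fun l => l % p = j), tm l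

lemma bds_two_mul (n : ℕ) : binDigitSum (2 * n) = binDigitSum n := by
  rcases Nat.eq_zero_or_pos n with h | h
  · simp [h]
  · unfold binDigitSum
    rw [Nat.digits_def' (by norm_num : (1:ℕ) < 2) (by omega)]
    simp [Nat.mul_mod_right, Nat.mul_div_cancel_left _ (by norm_num : 0 < 2)]

lemma bds_two_mul_add_one (n : ℕ) : binDigitSum (2 * n + 1) = binDigitSum n + 1 := by
  unfold binDigitSum
  rw [Nat.digits_def' (by norm_num : (1:ℕ) < 2) (by omega)]
  have h1 : (2 * n + 1) % 2 = 1 := by omega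
  have h2 : (2 * n + 1) / 2 = n := by omega
  rw [h1, h2]
  simp [Nat.add_comm]

lemma tm_two_mul (n : ℕ) : tm (2 * n) = tm n := by
  simp [tm, bds_two_mul]

lemma tm_two_mul_add_one (n : ℕ) : tm (2 * n + 1) = -tm n := by
  simp [tm, bds_two_mul_add_one, pow_succ]

lemma tm_four_mul (n : ℕ) : tm (4 * n) = tm n := by
  have : 4 * n = 2 * (2 * n) := by ring
  rw [this, tm_two_mul, tm_two_mul]

lemma tm_four_mul_add_one (n : ℕ) : tm (4 * n + 1) = -tm n := by
  have : 4 * n + 1 = 2 * (2 * n) + 1 := by ring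
  rw [this, tm_two_mul_add_one, tm_two_mul]

lemma tm_four_mul_add_two (n : ℕ) : tm (4 * n + 2) = -tm n := by
  have : 4 * n + 2 = 2 * (2 * n + 1) := by ring
  rw [this, tm_two_mul, tm_two_mul_add_one]

lemma tm_four_mul_add_three (n : ℕ) : tm (4 * n + 3) = tm n := by
  have : 4 * n + 3 = 2 * (2 * n + 1) + 1 := by ring
  rw [this, tm_two_mul_add_one, tm_two_mul_add_one, neg_neg]

lemma tm_le_one (n : ℕ) : tm n ≤ 1 := by
  rcases Nat.even_or_odd (binDigitSum n) with h | h
  · simp [tm, h.neg_one_pow]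
  · simp [tm, h.neg_one_pow]

lemma neg_one_le_tm (n : ℕ) : -1 ≤ tm n := by
  rcases Nat.even_or_odd (binDigitSum n) with h | h
  · simp [tm, h.neg_one_pow]
  · simp [tm, h.neg_one_pow]

/-- Auxiliary: the rarefied sum written with an `if`. -/
def A (n : ℕ) : ℤ := ∑ j ∈ Finset.range n, (if j % 3 = 0 then tm j else 0)

lemma rarefied_eq_A (n : ℕ) : rarefiedSum 3 0 n = A n := by
  unfold rarefiedSum A
  rw [Finset.sum_filter]

lemma A_succ (n : ℕ) : A (n + 1) = A n + (if n % 3 = 0 then tm n else 0) :=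
  Finset.sum_range_succ _ _

/-- The full partial sums of the Thue–Morse sequence. -/
def T (n : ℕ) : ℤ := ∑ j ∈ Finset.range n, tm j

lemma T_succ (n : ℕ) : T (n + 1) = T n + tm n := Finset.sum_range_succ _ _

lemma T_two_mul (n : ℕ) : T (2 * n) = 0 := by
  induction n with
  | zero => simp [T]
  | succ k ih =>
    have h : 2 * (k + 1) = (2 * k + 1) + 1 := by ring
    rw [h, T_succ, T_succ, ih, tm_two_mul, tm_two_mul_add_one]
    ring

lemma T_le_one (n : ℕ) : T n ≤ 1 := by
  rcases Nat.even_or_odd n with ⟨m, hm⟩ | ⟨m, hm⟩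
  · rw [hm, ← two_mul, T_two_mul]; norm_num
  · rw [hm, T_succ, T_two_mul, tm_two_mul]
    simpa using tm_le_one m

lemma A_four_mul (n : ℕ) : A (4 * n) = 3 * A n - T n := by
  induction n with
  | zero => simp [A, T]
  | succ k ih =>
    have h : 4 * (k + 1) = (4 * k + 3) + 1 := by ring
    have h3 : 4 * k + 3 = (4 * k + 2) + 1 := by ring
    have h2 : 4 * k + 2 = (4 * k + 1) + 1 := by ring
    have h1 : 4 * k + 1 = (4 * k) + 1 := rfl
    rw [h, A_succ, h3, A_succ, h2, A_succ, h1, A_succ, ih, A_succ, T_succ]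
    have hk : k % 3 = 0 ∨ k % 3 = 1 ∨ k % 3 = 2 := by omega
    rcases hk with hk | hk | hk
    · rw [if_pos (by omega : (4 * k) % 3 = 0), if_neg (by omega : ¬ (4 * k + 1) % 3 = 0),
        if_neg (by omega : ¬ (4 * k + 2) % 3 = 0), if_pos (by omega : (4 * k + 3) % 3 = 0),
        if_pos hk, tm_four_mul, tm_four_mul_add_three]
      ring
    · rw [if_neg (by omega : ¬ (4 * k) % 3 = 0), if_neg (by omega : ¬ (4 * k + 1) % 3 = 0),
        if_pos (by omega : (4 * k + 2) % 3 = 0), if_neg (by omega : ¬ (4 * k + 3) % 3 = 0),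
        if_neg (by omega : ¬ k % 3 = 0), tm_four_mul_add_two]
      ring
    · rw [if_neg (by omega : ¬ (4 * k) % 3 = 0), if_pos (by omega : (4 * k + 1) % 3 = 0),
        if_neg (by omega : ¬ (4 * k + 2) % 3 = 0), if_neg (by omega : ¬ (4 * k + 3) % 3 = 0),
        if_neg (by omega : ¬ k % 3 = 0), tm_four_mul_add_one]
      ring

lemma A_pos : ∀ m : ℕ, 1 ≤ m → 1 ≤ A m := by
  intro m
  induction m using Nat.strong_induction_on with
  | _ m ih =>
    intro hm
    by_cases h4 : m < 4
    · interval_cases m <;> norm_num [A, Finset.sum_range_succ, tm, binDigitSum]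
    · push_neg at h4
      set n := m / 4 with hn
      have hn1 : 1 ≤ n := by omega
      have hAn : 1 ≤ A n := ih n (by omega) hn1
      have hT : T n ≤ 1 := T_le_one n
      have hA4 : (2 : ℤ) ≤ A (4 * n) := by
        rw [A_four_mul]; linarith
      have hr : m = 4 * n ∨ m = 4 * n + 1 ∨ m = 4 * n + 2 ∨ m = 4 * n + 3 := by omega
      have hk : n % 3 = 0 ∨ n % 3 = 1 ∨ n % 3 = 2 := by omega
      have htm0 : -1 ≤ tm (4 * n) := neg_one_le_tm _
      have htm1 : -1 ≤ tm (4 * n + 1) := neg_one_le_tm _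
      have htm2 : -1 ≤ tm (4 * n + 2) := neg_one_le_tm _
      rcases hr with hr | hr | hr | hr
      · rw [hr]; linarith
      · rw [hr, A_succ]
        rcases hk with hk | hk | hk
        · rw [if_pos (by omega : (4 * n) % 3 = 0)]; linarith
        · rw [if_neg (by omega : ¬ (4 * n) % 3 = 0)]; linarith
        · rw [if_neg (by omega : ¬ (4 * n) % 3 = 0)]; linarith
      · rw [hr, show 4 * n + 2 = (4 * n + 1) + 1 from rfl, A_succ, A_succ]
        rcases hk with hk | hk | hk
        · rw [if_pos (by omega : (4 * n) % 3 = 0),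
            if_neg (by omega : ¬ (4 * n + 1) % 3 = 0)]; linarith
        · rw [if_neg (by omega : ¬ (4 * n) % 3 = 0),
            if_neg (by omega : ¬ (4 * n + 1) % 3 = 0)]; linarith
        · rw [if_neg (by omega : ¬ (4 * n) % 3 = 0),
            if_pos (by omega : (4 * n + 1) % 3 = 0)]; linarith
      · rw [hr, show 4 * n + 3 = ((4 * n + 1) + 1) + 1 from rfl, A_succ, A_succ, A_succ]
        rcases hk with hk | hk | hk
        · rw [if_pos (by omega : (4 * n) % 3 = 0),
            if_neg (by omega : ¬ (4 * n + 1) % 3 = 0),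
            if_neg (by omega : ¬ (4 * n + 1 + 1) % 3 = 0)]; linarith
        · rw [if_neg (by omega : ¬ (4 * n) % 3 = 0),
            if_neg (by omega : ¬ (4 * n + 1) % 3 = 0),
            if_pos (by omega : (4 * n + 1 + 1) % 3 = 0)]; linarith
        · rw [if_neg (by omega : ¬ (4 * n) % 3 = 0),
            if_pos (by omega : (4 * n + 1) % 3 = 0),
            if_neg (by omega : ¬ (4 * n + 1 + 1) % 3 = 0)]; linarith

theorem stmt_14 : ∀ n : ℕ, 1 ≤ n → 0 < rarefiedSum 3 0 n := by
  intro n hn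
  rw [rarefied_eq_A]
  have := A_pos n hn
  linarith
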